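/- Fix a constant q > 0 and let B_ME[U] = {M | ME[U](M) ≤ q}, restricted to programs without low-security inputs. Then B_ME[U] is a (⌊2^q⌋+1)-safety property, but it is not a k-safety property for any k ≤ ⌊2^q⌋. -/

import Mathlib

/-!
Under the uniform prior, `𝓥[U](H) = 1/|ℍ|` and each output `o` contributes
`U(O = o) · max_h U(h | o) = 1/|ℍ|` to `𝓥[U](H|O)`, so `ME[U](M) = log₂ |M(ℍ)|` and
`ME[U](M) ≤ q` says that `M` has at most `n = ⌊2^q⌋` distinct outputs. A violation is
witnessed by `n + 1` traces with distinct outputs. Conversely, any `k ≤ n` traces of the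
identity on `n + 1` inputs are the traces of a program on at most `max 1 k ≤ n` inputs.
-/

/-- A deterministic program without low-security inputs: a finite nonempty
high-security input set `Hs` and behavior `f` (inputs and outputs drawn from
the fixed countable universe `ℕ`). -/
structure ProgNL where
  Hs : Finset ℕ
  hH : Hs.Nonempty
  f : ℕ → ℕ

/-- The set of traces `⟦M⟧ = {(h,o) | h ∈ ℍ, o = M(h)}`. -/
def ProgNL.traces (M : ProgNL) : Set (ℕ × ℕ) :=
  {t | t.1 ∈ M.Hs ∧ t.2 = M.f t.1}

/-- The uniform distribution on the input set of `M`. -/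
noncomputable def ProgNL.U (M : ProgNL) : ℕ → ℝ :=
  fun h => if h ∈ M.Hs then (M.Hs.card : ℝ)⁻¹ else 0

/-- Probability `U(O = o)` where `O = M(H)`. -/
noncomputable def ProgNL.pO (M : ProgNL) (o : ℕ) : ℝ :=
  ∑ h ∈ M.Hs, if M.f h = o then M.U h else 0

/-- Vulnerability `𝓥[U](H) = max_h U(h)`. -/
noncomputable def ProgNL.VH (M : ProgNL) : ℝ :=
  M.Hs.sup' M.hH M.U

/-- Conditional vulnerability `𝓥[U](H|O) = Σ_o U(O=o) · max_h U(H=h|O=o)`. -/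
noncomputable def ProgNL.VHO (M : ProgNL) : ℝ :=
  ∑ o ∈ M.Hs.image M.f,
    M.pO o * M.Hs.sup' M.hH fun h => (if M.f h = o then M.U h else 0) / M.pO o

/-- Min-entropy-based QIF under the uniform distribution:
`ME[U](M) = 𝓗∞[U](H) − 𝓗∞[U](H|O)` with `𝓗∞ = log₂(1/𝓥)`. -/
noncomputable def ProgNL.MEU (M : ProgNL) : ℝ :=
  Real.logb 2 (1 / M.VH) - Real.logb 2 (1 / M.VHO)

/-- A set `P` of programs is a `k`-safety property iff whenever `M ∉ P`, there
is a set `T ⊆ ⟦M⟧` of at most `k` traces such that every program `M'` with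
`T ⊆ ⟦M'⟧` satisfies `M' ∉ P`. -/
def IsKSafety (k : ℕ) (P : ProgNL → Prop) : Prop :=
  ∀ M : ProgNL, ¬ P M →
    ∃ T ⊆ M.traces, T.ncard ≤ k ∧ ∀ M' : ProgNL, T ⊆ M'.traces → ¬ P M'

open Finset

namespace ProgNL

variable (M : ProgNL)

lemma traces_eq_image : M.traces = (fun h => (h, M.f h)) '' ↑M.Hs := by
  ext ⟨h, o⟩
  constructor
  · rintro ⟨hh, ho⟩
    exact ⟨h, hh, Prod.ext rfl ho.symm⟩
  · rintro ⟨h', hh', hpair⟩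
    cases hpair
    exact ⟨hh', rfl⟩

lemma traces_finite : M.traces.Finite := by
  rw [traces_eq_image]
  exact M.Hs.finite_toSet.image _

lemma card_Hs_pos : (0 : ℝ) < #M.Hs := by
  exact_mod_cast M.hH.card_pos

lemma card_image_pos : (0 : ℝ) < #(M.Hs.image M.f) := by
  exact_mod_cast (M.hH.image M.f).card_pos

lemma VH_eq : M.VH = (#M.Hs : ℝ)⁻¹ := by
  rw [VH, sup'_congr M.hH rfl (g := fun _ => (#M.Hs : ℝ)⁻¹) fun h hh => by simp [U, hh],
    sup'_const]

lemma pO_pos {o : ℕ} (ho : o ∈ M.Hs.image M.f) : 0 < M.pO o := by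
  obtain ⟨h₀, hh₀, rfl⟩ := mem_image.mp ho
  refine sum_pos' (fun h _ => ?_) ⟨h₀, hh₀, ?_⟩
  · unfold U
    split_ifs <;> positivity
  · simp only [if_true, U, hh₀]
    exact inv_pos.mpr M.card_Hs_pos

lemma pO_mul_sup'_eq {o : ℕ} (ho : o ∈ M.Hs.image M.f) :
    M.pO o * M.Hs.sup' M.hH (fun h => (if M.f h = o then M.U h else 0) / M.pO o) =
      (#M.Hs : ℝ)⁻¹ := by
  have hp := M.pO_pos ho
  obtain ⟨h₀, hh₀, hf₀⟩ := mem_image.mp ho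
  have hsup : M.Hs.sup' M.hH (fun h => (if M.f h = o then M.U h else 0) / M.pO o) =
      (#M.Hs : ℝ)⁻¹ / M.pO o := by
    refine le_antisymm (sup'_le _ _ fun h hh => ?_) (le_sup'_of_le _ hh₀ ?_)
    · by_cases hf : M.f h = o
      · simp [hf, U, hh]
      · simp only [hf, if_false, zero_div]
        positivity
    · simp [hf₀, U, hh₀]
  rw [hsup, mul_div_cancel₀ _ hp.ne']

lemma VHO_eq : M.VHO = #(M.Hs.image M.f) * (#M.Hs : ℝ)⁻¹ := by
  rw [VHO, sum_congr rfl fun o ho => M.pO_mul_sup'_eq ho, sum_const, nsmul_eq_mul]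

lemma MEU_eq_logb_card_image : M.MEU = Real.logb 2 #(M.Hs.image M.f) := by
  rw [MEU, VH_eq, VHO_eq, one_div, one_div, inv_inv, mul_inv, inv_inv,
    Real.logb_mul (inv_ne_zero M.card_image_pos.ne') M.card_Hs_pos.ne', Real.logb_inv]
  ring

lemma MEU_le_iff_card_image_le_floor (q : ℝ) :
    M.MEU ≤ q ↔ #(M.Hs.image M.f) ≤ ⌊(2 : ℝ) ^ q⌋₊ := by
  rw [MEU_eq_logb_card_image, Real.logb_le_iff_le_rpow one_lt_two M.card_image_pos,
    Nat.le_floor_iff (Real.rpow_pos_of_pos two_pos q).le]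

lemma image_subset_image_of_graph_subset_traces {u : Finset ℕ} {g : ℕ → ℕ}
    (hu : (fun h => (h, g h)) '' ↑u ⊆ M.traces) : u.image g ⊆ M.Hs.image M.f := by
  intro o ho
  obtain ⟨h, hh, rfl⟩ := mem_image.mp ho
  obtain ⟨hmem, hfh⟩ := hu ⟨h, hh, rfl⟩
  exact mem_image.mpr ⟨h, hmem, hfh.symm⟩

lemma exists_traces_superset_card_image_le {T : Set (ℕ × ℕ)} (hT : T ⊆ M.traces) :
    ∃ M' : ProgNL, T ⊆ M'.traces ∧ #(M'.Hs.image M'.f) ≤ max 1 T.ncard := by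
  obtain rfl | hne := T.eq_empty_or_nonempty
  · exact ⟨⟨{0}, singleton_nonempty 0, id⟩, Set.empty_subset _, by simp⟩
  have hfin : T.Finite := M.traces_finite.subset hT
  let M' : ProgNL :=
    ⟨hfin.toFinset.image Prod.fst, (hfin.toFinset_nonempty.mpr hne).image _, M.f⟩
  refine ⟨M', fun t ht => ⟨mem_image_of_mem _ (hfin.mem_toFinset.mpr ht), (hT ht).2⟩, ?_⟩
  calc #(M'.Hs.image M'.f) ≤ #M'.Hs := card_image_le
    _ ≤ #hfin.toFinset := card_image_le
    _ = T.ncard := (Set.ncard_eq_toFinset_card T hfin).symm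
    _ ≤ max 1 T.ncard := le_max_right _ _

end ProgNL

open ProgNL

lemma isKSafety_card_image_le (n : ℕ) :
    IsKSafety (n + 1) (fun M => #(M.Hs.image M.f) ≤ n) := by
  intro M hM
  obtain ⟨S, hS, hSc⟩ := exists_subset_card_eq (Nat.lt_of_not_le hM)
  have hsurj : Set.SurjOn M.f M.Hs S := fun o ho => by
    simpa using hS ho
  obtain ⟨u, huH, hinj, hus⟩ := exists_subset_injOn_image_eq_of_surjOn _ _ hsurj
  refine ⟨(fun h => (h, M.f h)) '' ↑u, ?_, ?_, fun M' hM' => ?_⟩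
  · rw [traces_eq_image]
    exact Set.image_mono huH
  · rw [Set.ncard_image_of_injective _ fun a b hab => congrArg Prod.fst hab, Set.ncard_coe_finset,
      ← card_image_of_injOn hinj, hus, hSc]
  · have := card_le_card (M'.image_subset_image_of_graph_subset_traces hM')
    rw [hus, hSc] at this
    omega

lemma not_isKSafety_card_image_le {n k : ℕ} (hn : 1 ≤ n) (hk : k ≤ n) :
    ¬ IsKSafety k (fun M => #(M.Hs.image M.f) ≤ n) := by
  intro hsafe
  let M : ProgNL := ⟨range (n + 1), nonempty_range_add_one, id⟩
  have hM : ¬ #(M.Hs.image M.f) ≤ n := by simp [M]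
  obtain ⟨T, hT, hTk, hfail⟩ := hsafe M hM
  obtain ⟨M', hTM', hM'⟩ := M.exists_traces_superset_card_image_le hT
  exact hfail M' hTM' (hM'.trans (max_le hn (hTk.trans hk)))

/-- For a constant bound `q > 0`, the bounding problem
`B_ME[U] = {M | ME[U](M) ≤ q}` for programs without low-security inputs is
`(⌊2^q⌋+1)`-safety, but not `k`-safety for any `k ≤ ⌊2^q⌋`. -/
theorem B_ME_ksafety (q : ℝ) (hq : 0 < q) :
    IsKSafety (⌊(2 : ℝ) ^ q⌋₊ + 1) (fun M => M.MEU ≤ q) ∧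
      ∀ k : ℕ, k ≤ ⌊(2 : ℝ) ^ q⌋₊ → ¬ IsKSafety k (fun M => M.MEU ≤ q) := by
  have hP :
      (fun M : ProgNL => M.MEU ≤ q) = fun M => #(M.Hs.image M.f) ≤ ⌊(2 : ℝ) ^ q⌋₊ :=
    funext fun M => propext (M.MEU_le_iff_card_image_le_floor q)
  have hn : 1 ≤ ⌊(2 : ℝ) ^ q⌋₊ :=
    (Nat.one_le_floor_iff _).mpr (Real.one_le_rpow one_le_two hq.le)
  rw [hP]
  exact ⟨isKSafety_card_image_le _, fun k hk => not_isKSafety_card_image_le hn hk⟩
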